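/- arXiv:1809.00575 — 5 statements merged into one kernel-verified Lean document; each statement's English description precedes it below -/
import Mathlib

section
/- Let g ∈ ℚ[[x,t]] be the formal power series with g² = (1-t)² - 4xt² and constant term 1. Define g_A = (1 + t - g)/(2t(tx+1)), g_B = (2tx + g - t + 1)/(2g(tx+1)), and g_D = (g-1)(g-1+t)/(2g), all as formal power series. Then g_B - 1 = 2(g_A - 1) + g_A·g_D. -/
open MvPowerSeries

/-- Let `g ∈ ℚ[[x,t]]` satisfy `g² = (1-t)² - 4xt²` with constant term `1`, and let
`g_A, g_B, g_D` be the power series with `2t(tx+1)·g_A = 1+t-g`,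
`2g(tx+1)·g_B = 2tx+g-t+1` and `2g·g_D = (g-1)(g-1+t)`. Then
`g_B - 1 = 2(g_A - 1) + g_A·g_D`. -/
theorem gB_from_gA_gD (g gA gB gD : MvPowerSeries (Fin 2) ℚ)
    (x t : MvPowerSeries (Fin 2) ℚ) (hx : x = MvPowerSeries.X 0) (ht : t = MvPowerSeries.X 1)
    (hg : g ^ 2 = (1 - t) ^ 2 - 4 * x * t ^ 2)
    (hg0 : MvPowerSeries.constantCoeff g = 1)
    (hA : 2 * t * (t * x + 1) * gA = 1 + t - g)
    (hB : 2 * g * (t * x + 1) * gB = 2 * t * x + g - t + 1)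
    (hD : 2 * g * gD = (g - 1) * (g - 1 + t)) :
    gB - 1 = 2 * (gA - 1) + gA * gD := by
  have hgne : g ≠ 0 := by
    intro h
    rw [h] at hg0
    simp at hg0
  have htne : t ≠ 0 := by
    rw [ht]
    intro h
    have := congrArg (MvPowerSeries.coeff (Finsupp.single 1 1)) h
    simp [MvPowerSeries.coeff_X] at this
  have htxne : t * x + 1 ≠ 0 := by
    intro h
    have := congrArg (MvPowerSeries.constantCoeff (σ := Fin 2) (R := ℚ)) h
    rw [hx, ht] at this
    simp at this
  have hM : (4 : MvPowerSeries (Fin 2) ℚ) * t * (t * x + 1) * g ≠ 0 := by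
    apply mul_ne_zero
    apply mul_ne_zero
    apply mul_ne_zero
    · intro h
      have := congrArg (MvPowerSeries.constantCoeff (σ := Fin 2) (R := ℚ)) h
      rw [map_ofNat] at this
      norm_num at this
    · exact htne
    · exact htxne
    · exact hgne
  have key : (4 : MvPowerSeries (Fin 2) ℚ) * t * (t * x + 1) * g * (gB - 1)
      = 4 * t * (t * x + 1) * g * (2 * (gA - 1) + gA * gD) := by
    linear_combination (2 * t) * hB - 4 * g * hA - (2 * g * gD) * hA
      - (1 + t - g) * hD + (g + 1) * hg
  exact mul_left_cancel₀ hM key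
end

section
/- Let g ∈ ℚ[[x,t]] satisfy g² = (1-t)² - 4xt² with constant term 1. Then g = 1 - t - 2·Σ_{n≥1} (Σ_{i=1}^{⌊n/2⌋} (C(2i-2,i-1)·C(n-2,2i-2)/i)·xⁱ)·tⁿ, i.e. the coefficient of xⁱtⁿ in g for i ≥ 1 is -2·C(2i-2,i-1)·C(n-2,2i-2)/i. -/
open MvPowerSeries

/-- Binomial coefficient with integer arguments (rational-valued), zero outside range. -/
noncomputable def ichoose (a b : ℤ) : ℚ :=
  if 0 ≤ b ∧ b ≤ a then ((a.toNat).choose b.toNat : ℚ) else 0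

section Aux

open Finset

lemma vander (m a b : ℕ) :
    ∑ c ∈ range (m+1), (c.choose a) * ((m - c).choose b) = (m+1).choose (a+b+1) := by
  induction m generalizing a with
  | zero =>
    cases a <;> cases b <;> simp [Nat.choose]
  | succ m ih =>
    rw [Finset.sum_range_succ']
    simp only [Nat.succ_sub_succ, Nat.sub_zero]
    cases a with
    | zero =>
      have h1 : ∀ c ∈ range (m+1), (c+1).choose 0 * ((m - c).choose b)
          = c.choose 0 * ((m - c).choose b) := by intro c _; simp
      rw [Finset.sum_congr rfl h1, ih 0]
      show (m+1).choose (0+b+1) + 1 * (m+1).choose b = _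
      rw [show (0:ℕ)+b+1 = b+1 by ring, one_mul, show m+1+1 = (m+1)+1 by rfl,
        Nat.choose_succ_succ' (m+1) b]
      omega
    | succ a =>
      have h1 : ∀ c ∈ range (m+1), (c+1).choose (a+1) * ((m - c).choose b)
          = c.choose a * ((m - c).choose b) + c.choose (a+1) * ((m - c).choose b) := by
        intro c _; rw [Nat.choose_succ_succ', add_mul]
      rw [Finset.sum_congr rfl h1, Finset.sum_add_distrib, ih a, ih (a+1)]
      rw [Nat.choose_eq_zero_of_lt (show (0:ℕ) < a+1 by omega), zero_mul, add_zero]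
      rw [show a+1+b+1 = (a+b+1)+1 by ring, Nat.choose_succ_succ' (m+1) (a+b+1)]

noncomputable def Fc : ℕ → ℕ → ℚ
  | 0, n => if n = 0 then 1 else if n = 1 then -1 else 0
  | (i+1), n => if 2 ≤ n then -2 * (catalan i : ℚ) * (((n-2).choose (2*i) : ℕ) : ℚ) else 0

lemma Fc_succ (i n : ℕ) :
    Fc (i+1) n = if 2 ≤ n then -2 * (catalan i : ℚ) * (((n-2).choose (2*i) : ℕ) : ℚ) else 0 := rfl

lemma Fc_zero (n : ℕ) : Fc 0 n = if n = 0 then 1 else if n = 1 then -1 else 0 := rfl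

lemma Fc_small (i n : ℕ) (h : n < 2) : Fc (i+1) n = 0 := by
  rw [Fc_succ, if_neg (by omega)]

-- inner convolution for both indices ≥ 1
lemma inner (a b n : ℕ) :
    ∑ c ∈ range (n+1), Fc (a+1) c * Fc (b+1) (n-c)
      = if 4 ≤ n then 4 * (catalan a : ℚ) * (catalan b : ℚ)
          * (((n-3).choose (2*a+2*b+1) : ℕ) : ℚ) else 0 := by
  rcases lt_or_ge n 4 with h | h
  · rw [if_neg (by omega)]
    apply Finset.sum_eq_zero
    intro c hc
    rcases lt_or_ge c 2 with hc2 | hc2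
    · rw [Fc_small a c hc2, zero_mul]
    · rw [Fc_small b (n-c) (by omega), mul_zero]
  · obtain ⟨m, rfl⟩ : ∃ m, n = m + 4 := ⟨n - 4, by omega⟩
    rw [if_pos h]
    rw [show m+4+1 = (m+3)+1+1 by ring, Finset.sum_range_succ', Finset.sum_range_succ']
    rw [Fc_small a 0 (by omega), Fc_small a 1 (by omega), zero_mul, zero_mul, add_zero, add_zero]
    rw [show m+3 = (m+2)+1 by ring, Finset.sum_range_succ, Finset.sum_range_succ]
    rw [Fc_small b (m+4 - (m+2+1+1)) (by omega), Fc_small b (m+4 - (m+1+1+1)) (by omega),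
      mul_zero, mul_zero, add_zero, add_zero]
    have h1 : ∀ c ∈ range (m+1), Fc (a+1) (c+1+1) * Fc (b+1) (m+4-(c+1+1))
        = (4 * (catalan a : ℚ) * (catalan b : ℚ)) * ((c.choose (2*a)) * ((m - c).choose (2*b)) : ℕ) := by
      intro c hc
      rw [mem_range] at hc
      rw [Fc_succ, Fc_succ, if_pos (by omega : 2 ≤ c+1+1), if_pos (by omega : 2 ≤ m+4-(c+1+1)),
        show c+1+1-2 = c by omega, show m+4-(c+1+1)-2 = m-c by omega]
      push_cast
      ring
    rw [Finset.sum_congr rfl h1, ← Finset.mul_sum, ← Nat.cast_sum, vander m (2*a) (2*b)]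
    rw [show m+4-3 = m+1 by omega]

-- boundary sums
lemma bound1 (i n : ℕ) :
    ∑ c ∈ range (n+1), Fc 0 c * Fc (i+1) (n-c) = Fc (i+1) n - Fc (i+1) (n-1) := by
  cases n with
  | zero => simp [Fc_zero, Fc_small]
  | succ m =>
    rcases Nat.eq_zero_or_pos m with rfl | hm
    · rw [Finset.sum_range_succ, Finset.sum_range_one]
      simp [Fc_zero, Fc_small]
    · obtain ⟨k, rfl⟩ : ∃ k, m = k + 1 := ⟨m - 1, by omega⟩
      rw [show k+1+1+1 = (k+1)+1+1 by ring, Finset.sum_range_succ', Finset.sum_range_succ']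
      have h1 : ∀ c ∈ range (k+1), Fc 0 (c+1+1) * Fc (i+1) (k+1+1-(c+1+1)) = 0 := by
        intro c _; rw [Fc_zero, if_neg (by omega), if_neg (by omega), zero_mul]
      rw [Finset.sum_congr rfl h1, Finset.sum_const_zero, zero_add]
      rw [Fc_zero, Fc_zero, if_neg (by omega), if_pos rfl, if_pos rfl]
      rw [show k+1+1 = k+2 by omega, show k+2-0 = k+2 by omega,
        show k+2-1 = k+1 by omega]
      ring

lemma bound2 (i n : ℕ) :
    ∑ c ∈ range (n+1), Fc (i+1) c * Fc 0 (n-c) = Fc (i+1) n - Fc (i+1) (n-1) := by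
  cases n with
  | zero => simp [Fc_zero, Fc_small]
  | succ m =>
    rcases Nat.eq_zero_or_pos m with rfl | hm
    · rw [Finset.sum_range_succ, Finset.sum_range_one]
      simp [Fc_zero, Fc_small]
    · obtain ⟨k, rfl⟩ : ∃ k, m = k + 1 := ⟨m - 1, by omega⟩
      rw [show k+1+1+1 = (k+1)+1+1 by ring, Finset.sum_range_succ, Finset.sum_range_succ]
      have h1 : ∀ c ∈ range (k+1), Fc (i+1) c * Fc 0 (k+1+1-c) = 0 := by
        intro c hc
        rw [mem_range] at hc
        rw [Fc_zero, if_neg (by omega), if_neg (by omega), mul_zero]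
      rw [Finset.sum_congr rfl h1, Finset.sum_const_zero, zero_add]
      rw [show k+1+1-(k+1) = 1 by omega, show k+1+1-(k+1+1) = 0 by omega,
        Fc_zero 1, Fc_zero 0, if_neg (by omega), if_pos rfl, if_pos rfl]
      rw [show k+1+1 = k+2 by omega, show k+2-1 = k+1 by omega]
      ring

noncomputable def Rc (i n : ℕ) : ℚ :=
  if i = 0 then (if n = 0 then 1 else if n = 1 then -2 else if n = 2 then 1 else 0)
  else if i = 1 ∧ n = 2 then -4 else 0

lemma catsum (j : ℕ) (hj : 1 ≤ j) :
    ∑ a ∈ range j, (catalan a : ℚ) * (catalan (j-1-a) : ℚ) = (catalan j : ℚ) := by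
  obtain ⟨k, rfl⟩ : ∃ k, j = k + 1 := ⟨j - 1, by omega⟩
  rw [catalan_succ' k, Finset.Nat.sum_antidiagonal_eq_sum_range_succ_mk]
  push_cast
  rfl

lemma conv (i n : ℕ) :
    ∑ a ∈ range (i+1), ∑ c ∈ range (n+1), Fc a c * Fc (i-a) (n-c) = Rc i n := by
  cases i with
  | zero =>
    rw [Finset.sum_range_one, Rc, if_pos rfl]
    simp only [Nat.zero_sub]
    rcases lt_or_ge n 3 with h | h
    · interval_cases n
      · simp [Fc_zero]
      · rw [Finset.sum_range_succ, Finset.sum_range_one]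
        simp [Fc_zero]
        norm_num
      · rw [Finset.sum_range_succ, Finset.sum_range_succ, Finset.sum_range_one]
        simp [Fc_zero]
    · obtain ⟨m, rfl⟩ : ∃ m, n = m + 3 := ⟨n - 3, by omega⟩
      rw [if_neg (by omega), if_neg (by omega), if_neg (by omega)]
      rw [show m+3+1 = (m+2)+1+1 by ring, Finset.sum_range_succ', Finset.sum_range_succ']
      have h1 : ∀ c ∈ range (m+2), Fc 0 (c+1+1) * Fc 0 (m+3-(c+1+1)) = 0 := by
        intro c _; rw [Fc_zero (c+1+1), if_neg (by omega), if_neg (by omega), zero_mul]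
      rw [Finset.sum_congr rfl h1, Finset.sum_const_zero, zero_add]
      rw [Fc_zero (0+1), Fc_zero 0, if_neg (by omega), if_pos rfl, if_pos rfl,
        show m+3-(0+1) = m+2 by omega, show m+3-0 = m+3 by omega,
        Fc_zero (m+2), Fc_zero (m+3), if_neg (by omega), if_neg (by omega),
        if_neg (by omega), if_neg (by omega)]
      ring
  | succ j =>
    rw [Finset.sum_range_succ', Finset.sum_range_succ]
    have hf0 : ∑ c ∈ range (n+1), Fc 0 c * Fc (j+1-0) (n-c)
        = Fc (j+1) n - Fc (j+1) (n-1) := bound1 j n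
    have hfj : ∑ c ∈ range (n+1), Fc (j+1) c * Fc (j+1-(j+1)) (n-c)
        = Fc (j+1) n - Fc (j+1) (n-1) := by
      rw [show j+1-(j+1) = 0 by omega]; exact bound2 j n
    rw [hf0, hfj]
    have hmid : ∑ a ∈ range j, ∑ c ∈ range (n+1), Fc (a+1) c * Fc (j+1-(a+1)) (n-c)
        = if 4 ≤ n ∧ 1 ≤ j then 4 * (catalan j : ℚ) * (((n-3).choose (2*j-1) : ℕ) : ℚ)
          else 0 := by
      rcases Nat.eq_zero_or_pos j with rfl | hj
      · rw [Finset.sum_range_zero, if_neg (by omega)]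
      have h1 : ∀ a ∈ range j, ∑ c ∈ range (n+1), Fc (a+1) c * Fc (j+1-(a+1)) (n-c)
          = if 4 ≤ n then (4 * ((catalan a : ℚ) * (catalan (j-1-a) : ℚ))
              * (((n-3).choose (2*j-1) : ℕ) : ℚ)) else 0 := by
        intro a ha
        rw [mem_range] at ha
        rw [show j+1-(a+1) = (j-1-a)+1 by omega, inner a (j-1-a) n,
          show 2*a+2*(j-1-a)+1 = 2*j-1 by omega]
        rcases le_or_gt 4 n with h4 | h4
        · rw [if_pos h4, if_pos h4]; ring
        · rw [if_neg (by omega), if_neg (by omega)]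
      rw [Finset.sum_congr rfl h1]
      rcases le_or_gt 4 n with h4 | h4
      · rw [if_pos (show 4 ≤ n ∧ 1 ≤ j from ⟨h4, hj⟩)]
        simp only [if_pos h4]
        rw [← Finset.sum_mul, ← Finset.mul_sum, catsum j hj]
      · simp only [if_neg (by omega : ¬ (4 ≤ n)), if_neg (by omega : ¬ (4 ≤ n ∧ 1 ≤ j)),
          Finset.sum_const_zero]
    rw [hmid]
    -- final case analysis
    rcases Nat.eq_zero_or_pos j with rfl | hj
    · rw [if_neg (by omega), Rc, if_neg (by omega)]
      rcases lt_or_ge n 2 with h2 | h2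
      · rw [if_neg (by omega), Fc_small 0 n h2, Fc_small 0 (n-1) (by omega)]; ring
      rcases Nat.eq_or_lt_of_le h2 with rfl | h3
      · rw [if_pos (by omega), Fc_succ, Fc_succ, if_pos (le_refl 2), if_neg (by omega)]
        norm_num
      · rw [if_neg (by omega), Fc_succ, Fc_succ, if_pos (by omega), if_pos (by omega)]
        simp only [Nat.mul_zero, Nat.choose_zero_right]
        norm_num
    · obtain ⟨k, rfl⟩ : ∃ k, j = k + 1 := ⟨j - 1, by omega⟩
      rw [Rc, if_neg (show ¬(k+1+1 = 0) by omega),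
        if_neg (show ¬(k+1+1 = 1 ∧ n = 2) by omega)]
      rcases lt_or_ge n 2 with h2 | h2
      · rw [if_neg (by omega), Fc_small _ n h2, Fc_small _ (n-1) (by omega)]; ring
      rcases lt_or_ge n 4 with h4 | h4
      · -- n = 2 or 3 : Fc (k+2) n = 0 and Fc (k+2) (n-1) = 0
        have e1 : Fc (k+1+1) n = 0 := by
          rw [Fc_succ, if_pos h2, Nat.choose_eq_zero_of_lt (by omega), Nat.cast_zero, mul_zero]
        have e2 : Fc (k+1+1) (n-1) = 0 := by
          rcases lt_or_ge (n-1) 2 with h | h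
          · exact Fc_small _ _ h
          · rw [Fc_succ, if_pos h, Nat.choose_eq_zero_of_lt (by omega), Nat.cast_zero, mul_zero]
        rw [if_neg (by omega), e1, e2]; ring
      · obtain ⟨m, rfl⟩ : ∃ m, n = m + 4 := ⟨n - 4, by omega⟩
        rw [if_pos ⟨h4, by omega⟩, Fc_succ, Fc_succ, if_pos (by omega), if_pos (by omega),
          show m+4-2 = (m+1)+1 by omega, show m+4-1-2 = m+1 by omega,
          show 2*(k+1) = (2*k+1)+1 by ring, Nat.choose_succ_succ' (m+1) (2*k+1),
          show m+4-3 = m+1 by omega, show 2*k+1+1-1 = 2*k+1 by omega]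
        push_cast
        ring

lemma ichoose_nat (a b : ℕ) : ichoose a b = (a.choose b : ℚ) := by
  unfold ichoose
  split
  · next h => simp
  · next h =>
    have : a < b := by omega
    rw [Nat.choose_eq_zero_of_lt this, Nat.cast_zero]

lemma fin2_decomp (d : Fin 2 →₀ ℕ) :
    Finsupp.single (0 : Fin 2) (d 0) + Finsupp.single (1 : Fin 2) (d 1) = d := by
  ext s
  fin_cases s <;> simp [Finsupp.single_apply]

lemma eval0 (a c : ℕ) : (Finsupp.single (0 : Fin 2) a + Finsupp.single (1 : Fin 2) c) 0 = a := by
  simp [Finsupp.single_apply]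

lemma eval1 (a c : ℕ) : (Finsupp.single (0 : Fin 2) a + Finsupp.single (1 : Fin 2) c) 1 = c := by
  simp [Finsupp.single_apply]

lemma fin2_eq_iff (d : Fin 2 →₀ ℕ) (a c : ℕ) :
    d = Finsupp.single (0 : Fin 2) a + Finsupp.single (1 : Fin 2) c ↔ d 0 = a ∧ d 1 = c := by
  constructor
  · rintro rfl; exact ⟨eval0 a c, eval1 a c⟩
  · rintro ⟨h0, h1⟩
    rw [← fin2_decomp d, h0, h1]

noncomputable def Gs : MvPowerSeries (Fin 2) ℚ := fun d => Fc (d 0) (d 1)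

lemma coeff_Gs (d : Fin 2 →₀ ℕ) : MvPowerSeries.coeff d Gs = Fc (d 0) (d 1) := rfl

lemma constantCoeff_Gs : MvPowerSeries.constantCoeff Gs = 1 := by
  show Fc ((0 : Fin 2 →₀ ℕ) 0) ((0 : Fin 2 →₀ ℕ) 1) = 1
  simp [Fc_zero]

lemma reindex (d : Fin 2 →₀ ℕ) :
    ∑ p ∈ Finset.HasAntidiagonal.antidiagonal d, Fc (p.1 0) (p.1 1) * Fc (p.2 0) (p.2 1)
      = ∑ z ∈ Finset.HasAntidiagonal.antidiagonal (d 0) ×ˢ Finset.HasAntidiagonal.antidiagonal (d 1),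
          Fc z.1.1 z.2.1 * Fc z.1.2 z.2.2 := by
  refine Finset.sum_bij'
    (fun (p : (Fin 2 →₀ ℕ) × (Fin 2 →₀ ℕ)) (_ : p ∈ Finset.HasAntidiagonal.antidiagonal d) =>
      (((p.1 0 : ℕ), (p.2 0 : ℕ)), ((p.1 1 : ℕ), (p.2 1 : ℕ))))
    (fun (z : (ℕ × ℕ) × (ℕ × ℕ)) _ =>
      ((Finsupp.single (0 : Fin 2) z.1.1 + Finsupp.single (1 : Fin 2) z.2.1 : Fin 2 →₀ ℕ),
       (Finsupp.single (0 : Fin 2) z.1.2 + Finsupp.single (1 : Fin 2) z.2.2 : Fin 2 →₀ ℕ)))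
    ?_ ?_ ?_ ?_ ?_
  · intro p hp
    rw [Finset.HasAntidiagonal.mem_antidiagonal] at hp
    rw [Finset.mem_product, Finset.HasAntidiagonal.mem_antidiagonal, Finset.HasAntidiagonal.mem_antidiagonal]
    constructor
    · rw [← Finsupp.add_apply, hp]
    · rw [← Finsupp.add_apply, hp]
  · intro z hz
    rw [Finset.mem_product, Finset.HasAntidiagonal.mem_antidiagonal, Finset.HasAntidiagonal.mem_antidiagonal] at hz
    rw [Finset.HasAntidiagonal.mem_antidiagonal]
    rw [show (Finsupp.single (0:Fin 2) z.1.1 + Finsupp.single (1:Fin 2) z.2.1)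
        + (Finsupp.single (0:Fin 2) z.1.2 + Finsupp.single (1:Fin 2) z.2.2)
        = Finsupp.single (0:Fin 2) (z.1.1 + z.1.2) + Finsupp.single (1:Fin 2) (z.2.1 + z.2.2) by
      rw [Finsupp.single_add, Finsupp.single_add]; abel]
    rw [hz.1, hz.2, fin2_decomp]
  · intro p hp
    exact Prod.ext (fin2_decomp p.1) (fin2_decomp p.2)
  · intro z hz
    simp only [eval0, eval1]
  · intro p hp
    rfl

lemma Gs_sq : Gs ^ 2 = (1 - MvPowerSeries.X 1 : MvPowerSeries (Fin 2) ℚ) ^ 2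
    - 4 * MvPowerSeries.X 0 * MvPowerSeries.X 1 ^ 2 := by
  ext d
  have lhs : MvPowerSeries.coeff d (Gs ^ 2) = Rc (d 0) (d 1) := by
    rw [pow_two, MvPowerSeries.coeff_mul]
    simp only [coeff_Gs]
    rw [reindex, Finset.sum_product, Finset.Nat.sum_antidiagonal_eq_sum_range_succ_mk]
    have h1 : ∀ a ∈ range (d 0 + 1),
        (∑ y ∈ Finset.HasAntidiagonal.antidiagonal (d 1), Fc a y.1 * Fc (d 0 - a) y.2)
        = ∑ c ∈ range (d 1 + 1), Fc a c * Fc (d 0 - a) (d 1 - c) := by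
      intro a _
      exact Finset.Nat.sum_antidiagonal_eq_sum_range_succ_mk _ _
    rw [Finset.sum_congr rfl h1, conv]
  rw [lhs]
  have expand : (1 - MvPowerSeries.X 1 : MvPowerSeries (Fin 2) ℚ) ^ 2
      - 4 * MvPowerSeries.X 0 * MvPowerSeries.X 1 ^ 2
      = 1 - (MvPowerSeries.C (σ := Fin 2) (R := ℚ)) 2 * MvPowerSeries.X 1
        + MvPowerSeries.X 1 ^ 2
        - (MvPowerSeries.C (σ := Fin 2) (R := ℚ)) 4 * (MvPowerSeries.X 0 * MvPowerSeries.X 1 ^ 2) := by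
    rw [show ((MvPowerSeries.C (σ := Fin 2) (R := ℚ))) 2 = (2 : MvPowerSeries (Fin 2) ℚ) from map_ofNat _ 2,
      show ((MvPowerSeries.C (σ := Fin 2) (R := ℚ))) 4 = (4 : MvPowerSeries (Fin 2) ℚ) from map_ofNat _ 4]
    ring
  rw [expand]
  rw [map_sub, map_add, map_sub, MvPowerSeries.coeff_C_mul, MvPowerSeries.coeff_C_mul,
    MvPowerSeries.coeff_one]
  rw [MvPowerSeries.X_pow_eq 1 2,
    show (MvPowerSeries.X 0 : MvPowerSeries (Fin 2) ℚ)
      = MvPowerSeries.monomial (Finsupp.single 0 1) (1:ℚ) from rfl,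
    MvPowerSeries.monomial_mul_monomial, one_mul, MvPowerSeries.coeff_monomial,
    MvPowerSeries.coeff_monomial, MvPowerSeries.coeff_X]
  have h00 : (d = 0) ↔ (d 0 = 0 ∧ d 1 = 0) := by
    rw [← fin2_eq_iff]; simp
  have h01 : (d = Finsupp.single (1 : Fin 2) 1) ↔ (d 0 = 0 ∧ d 1 = 1) := by
    rw [← fin2_eq_iff]; simp
  have h02 : (d = Finsupp.single (1 : Fin 2) 2) ↔ (d 0 = 0 ∧ d 1 = 2) := by
    rw [← fin2_eq_iff]; simp
  have h12 : (d = Finsupp.single (0 : Fin 2) 1 + Finsupp.single (1 : Fin 2) 2)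
      ↔ (d 0 = 1 ∧ d 1 = 2) := fin2_eq_iff d 1 2
  simp only [h00, h01, h02, h12, Rc]
  split_ifs <;> norm_num <;> omega

end Aux

/-- Let `g ∈ ℚ[[x,t]]` satisfy `g² = (1-t)² - 4xt²` with constant term `1`. Then
`g = 1 - t - 2·Σ_{n≥1} (Σ_{i=1}^{⌊n/2⌋} (C(2i-2,i-1)·C(n-2,2i-2)/i)·xⁱ)·tⁿ`:
the coefficient of `x⁰tⁿ` is that of `1 - t`, and for `i ≥ 1` the coefficient of
`xⁱtⁿ` is `-2·C(2i-2,i-1)·C(n-2,2i-2)/i`. -/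
theorem coefficients_of_g (g : MvPowerSeries (Fin 2) ℚ)
    (x t : MvPowerSeries (Fin 2) ℚ) (hx : x = MvPowerSeries.X 0) (ht : t = MvPowerSeries.X 1)
    (hg : g ^ 2 = (1 - t) ^ 2 - 4 * x * t ^ 2)
    (hg0 : MvPowerSeries.constantCoeff g = 1) :
    (∀ n : ℕ, MvPowerSeries.coeff (Finsupp.single 1 n) g =
        (if n = 0 then 1 else if n = 1 then -1 else 0)) ∧
    (∀ i n : ℕ, 1 ≤ i →
      MvPowerSeries.coeff (Finsupp.single 0 i + Finsupp.single 1 n) g =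
        -2 * ichoose (2 * i - 2) (i - 1) * ichoose ((n : ℤ) - 2) (2 * i - 2) / i) := by
  subst hx ht
  have key : g = Gs := by
    have h2 : (g - Gs) * (g + Gs) = 0 := by
      have e : (g - Gs) * (g + Gs) = g ^ 2 - Gs ^ 2 := by ring
      rw [e, hg, Gs_sq, sub_self]
    rcases mul_eq_zero.mp h2 with h | h
    · exact sub_eq_zero.mp h
    · exfalso
      have hc := congrArg (MvPowerSeries.constantCoeff) h
      rw [map_add, hg0, constantCoeff_Gs, map_zero] at hc
      norm_num at hc
  subst key
  constructor
  · intro n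
    rw [coeff_Gs]
    have e0 : (Finsupp.single (1 : Fin 2) n) 0 = 0 := by
      rw [Finsupp.single_apply, if_neg (by decide)]
    have e1 : (Finsupp.single (1 : Fin 2) n) 1 = n := Finsupp.single_eq_same
    rw [e0, e1, Fc_zero]
  · intro i n hi
    obtain ⟨j, rfl⟩ : ∃ j, i = j + 1 := ⟨i - 1, by omega⟩
    rw [coeff_Gs, eval0, eval1, Fc_succ]
    have ia : ichoose (2 * ((j : ℕ) + 1 : ℕ) - 2) (((j : ℕ) + 1 : ℕ) - 1)
        = ((j + 1 : ℕ) : ℚ) * (catalan j : ℚ) := by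
      rw [show (2 * ((j : ℕ) + 1 : ℕ) - 2 : ℤ) = ((2 * j : ℕ) : ℤ) by push_cast; ring,
        show ((((j : ℕ) + 1 : ℕ) : ℤ) - 1) = ((j : ℕ) : ℤ) by push_cast; ring,
        ichoose_nat]
      rw [show (2 * j).choose j = j.centralBinom from rfl,
        ← succ_mul_catalan_eq_centralBinom]
      push_cast
      ring
    rw [ia]
    rcases le_or_gt 2 n with h2 | h2
    · rw [if_pos h2]
      have ib : ichoose ((n : ℤ) - 2) (2 * ((j : ℕ) + 1 : ℕ) - 2)
          = (((n - 2 : ℕ).choose (2 * j) : ℕ) : ℚ) := by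
        rw [show ((n : ℤ) - 2) = (((n - 2 : ℕ) : ℤ)) by omega,
          show (2 * ((j : ℕ) + 1 : ℕ) - 2 : ℤ) = ((2 * j : ℕ) : ℤ) by push_cast; ring,
          ichoose_nat]
      rw [ib]
      have hj1 : ((j : ℚ) + 1) ≠ 0 := by positivity
      push_cast
      field_simp
    · rw [if_neg (by omega)]
      have ib : ichoose ((n : ℤ) - 2) (2 * ((j : ℕ) + 1 : ℕ) - 2) = 0 := by
        unfold ichoose
        rw [if_neg (by push_cast; omega)]
      rw [ib]
      simp
end

section
/- The generating series G_A(x,y,t) = Σ_{m,k,ℓ≥0} [(ℓ+1)/(ℓ+k+m+1)]·C(ℓ+2k+m,k)·C(k+m-1,k-1)·x^k y^ℓ t^{2k+m+ℓ} and g_A(x,t) = G_A(x,0,t)·(restricted to ℓ=0 terms) = Σ_{m,k≥0} [1/(k+m+1)]·C(2k+m,k)·C(k+m-1,k-1)·x^k t^{2k+m} satisfy the functional equation G_A = g_A + y·t·g_A·G_A in ℚ[[x,y,t]], hence G_A = g_A/(1 - yt·g_A). -/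
open MvPowerSeries

/-- Coefficient of `x^k t^{2k+m}` in `g_A` (constant term `1` by convention). -/
noncomputable def cA (k m : ℕ) : ℚ :=
  if k = 0 then (if m = 0 then 1 else 0)
  else (1 / ((k : ℚ) + m + 1)) * (Nat.choose (2 * k + m) k) * (Nat.choose (k + m - 1) (k - 1))

/-- Coefficient of `x^k y^ℓ t^{2k+ℓ+m}` in `G_A`. -/
noncomputable def cGA (k l m : ℕ) : ℚ :=
  if k = 0 then (if m = 0 then 1 else 0)
  else (((l : ℚ) + 1) / ((l : ℚ) + k + m + 1)) * (Nat.choose (l + 2 * k + m) k) *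
    (Nat.choose (k + m - 1) (k - 1))

/-- `g_A ∈ ℚ[[x,y,t]]`, the generating series of local γ-vectors of type A
(variables `x = X 0`, `y = X 1`, `t = X 2`; `g_A` does not involve `y`). -/
noncomputable def gA : MvPowerSeries (Fin 3) ℚ :=
  fun e => if e 1 = 0 ∧ 2 * e 0 ≤ e 2 then cA (e 0) (e 2 - 2 * e 0) else 0

/-- `G_A ∈ ℚ[[x,y,t]]`, the generating series of Γ-triangles of type A associahedra. -/
noncomputable def GA : MvPowerSeries (Fin 3) ℚ :=
  fun e => if 2 * e 0 + e 1 ≤ e 2 then cGA (e 0) (e 1) (e 2 - 2 * e 0 - e 1) else 0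


set_option maxHeartbeats 1000000

namespace GAaux
open Finset


noncomputable def b (l k n : ℕ) : ℚ :=
  if k = 0 then (if n = 0 then 1 else 0)
  else if n < k then 0
  else ((l : ℚ) / ((n : ℚ) + l)) * (Nat.choose (n + l + k - 1) k) * (Nat.choose (n - 1) (k - 1))

lemma chooseL1 (m k : ℕ) : (m+1).choose k * (m+1-k) = m.choose k * (m+1) := by
  have h := Nat.choose_succ_right_eq (m+1) k
  have h2 := Nat.add_one_mul_choose_eq m k
  rw [← h, ← h2]; ring

lemma qL1 (m k : ℕ) (h : k ≤ m + 1) :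
    ((m+1).choose k : ℚ) * ((m:ℚ) + 1 - k) = (m.choose k : ℚ) * (m + 1) := by
  have h1 := chooseL1 m k
  have e : ((m + 1 - k : ℕ) : ℚ) = (m:ℚ) + 1 - k := by
    push_cast [Nat.cast_sub h]; ring
  calc ((m+1).choose k : ℚ) * ((m:ℚ) + 1 - k) = ((m+1).choose k : ℚ) * ((m + 1 - k : ℕ) : ℚ) := by rw [e]
    _ = (m.choose k : ℚ) * (m + 1) := by exact_mod_cast congrArg (Nat.cast : ℕ → ℚ) h1

lemma qL2 (m k : ℕ) (h : k ≤ m) :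
    (m.choose (k+1) : ℚ) * ((k:ℚ)+1) = (m.choose k : ℚ) * ((m:ℚ) - k) := by
  have h1 := Nat.choose_succ_right_eq m k
  calc (m.choose (k+1) : ℚ) * ((k:ℚ)+1) = ((m.choose (k+1) * (k+1) : ℕ) : ℚ) := by push_cast; ring
    _ = ((m.choose k * (m - k) : ℕ) : ℚ) := by exact_mod_cast h1
    _ = (m.choose k : ℚ) * ((m:ℚ) - k) := by push_cast [Nat.cast_sub h]; ring

lemma bR (l k n : ℕ) :
    b (l+2) k n + (if k = 0 then 0 else b (l+2) (k-1) n)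
      = b (l+1) k (n+1) + b (l+1) k n - b l k (n+1) := by
  rcases Nat.eq_zero_or_pos k with hk | hk
  · subst hk; simp [b]
  rw [if_neg (by omega : ¬ k = 0)]
  rcases lt_trichotomy (n+1) k with hnk | hnk | hnk
  · -- k ≥ n+2 : everything vanishes
    simp only [b]
    split_ifs <;> first | omega | ring
  · -- n = k-1
    rcases Nat.exists_eq_add_of_le hk with ⟨j0, hj⟩
    rcases Nat.eq_zero_or_pos j0 with h0 | h0
    · -- k = 1, n = 0
      have e1 : k = 1 := by omega
      have e2 : n = 0 := by omega
      subst e1 e2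
      simp only [b]
      norm_num [Nat.choose_one_right]
      have h1 : ((l:ℚ)+2) ≠ 0 := by positivity
      have h2 : ((l:ℚ)+1) ≠ 0 := by positivity
      field_simp
      ring
    · -- k = j+2, n = j+1
      obtain ⟨j, rfl⟩ : ∃ j, k = j + 2 := ⟨j0 - 1, by omega⟩
      obtain rfl : n = j + 1 := by omega
      rw [show j + 2 - 1 = j + 1 from by omega]
      have hd1 : ((j:ℚ)+l+2) ≠ 0 := by positivity
      have hd2 : ((j:ℚ)+2) ≠ 0 := by positivity
      have E1 : ((2*j+l+4).choose (j+2) : ℚ)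
          = ((2*j+l+3).choose (j+2) : ℚ) * ((2*j:ℚ)+l+4) / ((j:ℚ)+l+2) := by
        rw [eq_div_iff hd1]
        have := qL1 (2*j+l+3) (j+2) (by omega)
        rw [show (2*j+l+3+1) = 2*j+l+4 from by omega] at this
        norm_num at this ⊢; push_cast at this ⊢; linarith [this]
      have E2 : ((2*j+l+3).choose (j+2) : ℚ)
          = ((2*j+l+3).choose (j+1) : ℚ) * ((j:ℚ)+l+2) / ((j:ℚ)+2) := by
        rw [eq_div_iff hd2]
        have := qL2 (2*j+l+3) (j+1) (by omega)
        norm_num at this ⊢; push_cast at this ⊢; linarith [this]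
      simp only [b]
      split_ifs <;> try (first | omega | contradiction)
      rw [show j + 1 + (l + 2) + (j + 1) - 1 = 2*j+l+3 from by omega,
          show j + 1 - 1 = j from by omega,
          show j + 2 + (l + 1) + (j + 2) - 1 = 2*j+l+4 from by omega,
          show j + 2 - 1 = j + 1 from by omega,
          show j + 2 + l + (j + 2) - 1 = 2*j+l+3 from by omega,
          Nat.choose_self, E1, E2]
      simp only [Nat.choose_self]
      push_cast
      field_simp
      ring
  · -- n ≥ k
    rcases Nat.eq_zero_or_pos (k - 1) with h0 | h0
    · -- k = 1, n = j+1
      have e1 : k = 1 := by omega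
      subst e1
      obtain ⟨j, rfl⟩ : ∃ j, n = j + 1 := ⟨n - 1, by omega⟩
      rw [show (1:ℕ) - 1 = 0 from rfl]
      simp only [b]
      split_ifs <;> try (first | omega | contradiction)
      rw [show j + 1 + (l + 2) + 1 - 1 = j+l+3 from by omega,
          show j + 1 - 1 = j from by omega,
          show j + 1 + 1 + (l + 1) + 1 - 1 = j+l+3 from by omega,
          show j + 1 + 1 - 1 = j + 1 from by omega,
          show j + 1 + (l + 1) + 1 - 1 = j+l+2 from by omega,
          show j + 1 + 1 + l + 1 - 1 = j+l+2 from by omega]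
      simp only [Nat.choose_one_right, Nat.choose_zero_right]
      have h1 : ((j:ℚ)+1+(l+2)) ≠ 0 := by positivity
      have h2 : ((j:ℚ)+2+(l+1)) ≠ 0 := by positivity
      have h3 : ((j:ℚ)+1+(l+1)) ≠ 0 := by positivity
      have h4 : ((j:ℚ)+2+l) ≠ 0 := by positivity
      push_cast
      simp only [Nat.choose_zero_right, Nat.cast_one]
      field_simp
      ring
    · -- k = i+2, n = i+2+j
      obtain ⟨i, rfl⟩ : ∃ i, k = i + 2 := ⟨k - 2, by omega⟩
      obtain ⟨j, rfl⟩ : ∃ j, n = i + 2 + j := ⟨n - (i+2), by omega⟩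
      rw [show i + 2 - 1 = i + 1 from by omega]
      have hd1 : ((i:ℚ)+j+l+3) ≠ 0 := by positivity
      have hd2 : ((j:ℚ)+1) ≠ 0 := by positivity
      have hd3 : ((i:ℚ)+2) ≠ 0 := by positivity
      have hd4 : ((i:ℚ)+j+l+4) ≠ 0 := by positivity
      have E1 : ((2*i+j+l+5).choose (i+2) : ℚ)
          = ((2*i+j+l+4).choose (i+2) : ℚ) * ((2*i:ℚ)+j+l+5) / ((i:ℚ)+j+l+3) := by
        rw [eq_div_iff hd1]
        have := qL1 (2*i+j+l+4) (i+2) (by omega)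
        rw [show (2*i+j+l+4+1) = 2*i+j+l+5 from by omega] at this
        push_cast at this ⊢; linarith [this]
      have E2 : ((2*i+j+l+4).choose (i+1) : ℚ)
          = ((2*i+j+l+4).choose (i+2) : ℚ) * ((i:ℚ)+2) / ((i:ℚ)+j+l+3) := by
        rw [eq_div_iff hd1]
        have := qL2 (2*i+j+l+4) (i+1) (by omega)
        rw [show (i+1+1) = i+2 from by omega] at this
        push_cast at this ⊢; linarith [this]
      have E3 : ((i+j+2).choose (i+1) : ℚ)
          = ((i+j+1).choose (i+1) : ℚ) * ((i:ℚ)+j+2) / ((j:ℚ)+1) := by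
        rw [eq_div_iff hd2]
        have := qL1 (i+j+1) (i+1) (by omega)
        rw [show (i+j+1+1) = i+j+2 from by omega] at this
        push_cast at this ⊢; linarith [this]
      have E4 : ((i+j+1).choose i : ℚ)
          = ((i+j+1).choose (i+1) : ℚ) * ((i:ℚ)+1) / ((j:ℚ)+1) := by
        rw [eq_div_iff hd2]
        have := qL2 (i+j+1) i (by omega)
        rw [show (i+1) = i+1 from rfl] at this
        push_cast at this ⊢; linarith [this]
      simp only [b]
      split_ifs <;> try (first | omega | contradiction)
      rw [show i + 2 + j + (l + 2) + (i + 2) - 1 = 2*i+j+l+5 from by omega,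
          show i + 2 + j - 1 = i+j+1 from by omega,
          show i + 2 - 1 = i + 1 from by omega,
          show i + 2 + j + (l + 2) + (i + 1) - 1 = 2*i+j+l+4 from by omega,
          show i + 1 - 1 = i from by omega,
          show i + 2 + j + 1 + (l + 1) + (i + 2) - 1 = 2*i+j+l+5 from by omega,
          show i + 2 + j + 1 - 1 = i+j+2 from by omega,
          show i + 2 + j + (l + 1) + (i + 2) - 1 = 2*i+j+l+4 from by omega,
          show i + 2 + j + 1 + l + (i + 2) - 1 = 2*i+j+l+4 from by omega,
          E1, E2, E3, E4]
      push_cast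
      field_simp
      ring



noncomputable def S (l k n : ℕ) : ℚ :=
  ∑ a ∈ range (k+1), ∑ m ∈ range (n+1), b 1 a m * b l (k-a) (n-m)

lemma b_n0 (l k : ℕ) : b l k 0 = if k = 0 then 1 else 0 := by
  unfold b; split_ifs <;> first | rfl | omega

lemma b_lev0 (k n : ℕ) : b 0 k n = if k = 0 then (if n = 0 then 1 else 0) else 0 := by
  unfold b; split_ifs <;> first | rfl | omega | (push_cast; ring)

lemma S_l0 (k n : ℕ) : S 0 k n = b 1 k n := by
  unfold S
  rw [Finset.sum_eq_single_of_mem k (self_mem_range_succ k)]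
  · rw [Finset.sum_eq_single_of_mem n (self_mem_range_succ n)]
    · simp [b_lev0]
    · intro m hmem hm
      simp only [mem_range] at hmem
      rw [b_lev0, Nat.sub_self, if_pos rfl, if_neg (by omega)]
      ring
  · intro a ha ha'
    simp only [mem_range] at ha
    apply Finset.sum_eq_zero
    intro m _
    rw [b_lev0, if_neg (by omega)]
    ring

lemma S_n0 (l k : ℕ) : S l k 0 = if k = 0 then 1 else 0 := by
  unfold S
  simp only [zero_add, range_one, sum_singleton, Nat.sub_zero, Nat.sub_self, b_n0]
  rcases Nat.eq_zero_or_pos k with rfl|hk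
  · simp
  · rw [if_neg (by omega)]
    apply Finset.sum_eq_zero
    intro a ha
    simp only [mem_range] at ha
    rcases Nat.eq_zero_or_pos a with rfl|ha0
    · rw [if_pos rfl, if_neg (by omega : ¬ k - 0 = 0)]; ring
    · rw [if_neg (by omega : ¬ a = 0)]; ring

lemma S_succ (L k n : ℕ) :
    S L k (n+1) = (∑ a ∈ range (k+1), ∑ m ∈ range (n+1), b 1 a m * b L (k-a) ((n-m)+1))
      + b 1 k (n+1) := by
  unfold S
  have h1 : ∀ a ∈ range (k+1), ∑ m ∈ range (n+1+1), b 1 a m * b L (k-a) (n+1-m)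
      = (∑ m ∈ range (n+1), b 1 a m * b L (k-a) ((n-m)+1)) + b 1 a (n+1) * b L (k-a) 0 := by
    intro a _
    rw [Finset.sum_range_succ]
    congr 1
    · apply Finset.sum_congr rfl; intro m hm
      simp only [mem_range] at hm
      rw [show n+1-m = (n-m)+1 from by omega]
    · rw [Nat.sub_self]
  rw [Finset.sum_congr rfl h1, Finset.sum_add_distrib]
  congr 1
  rw [Finset.sum_eq_single_of_mem k (self_mem_range_succ k)]
  · rw [b_n0, Nat.sub_self, if_pos rfl, mul_one]
  · intro a ha ha'
    simp only [mem_range] at ha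
    rw [b_n0, if_neg (by omega)]
    ring

lemma T2lem (l k n : ℕ) :
    (∑ a ∈ range (k+1), ∑ m ∈ range (n+1),
        b 1 a m * (if k-a = 0 then 0 else b (l+2) (k-a-1) (n-m)))
      = if k = 0 then 0 else S (l+2) (k-1) n := by
  rcases Nat.eq_zero_or_pos k with rfl|hk
  · simp
  · obtain ⟨k', rfl⟩ : ∃ k', k = k' + 1 := ⟨k - 1, by omega⟩
    rw [if_neg (by omega), Finset.sum_range_succ]
    have last0 : ∑ m ∈ range (n+1), b 1 (k'+1) m
        * (if k'+1-(k'+1) = 0 then 0 else b (l+2) (k'+1-(k'+1)-1) (n-m)) = 0 := by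
      apply Finset.sum_eq_zero; intro m _
      rw [Nat.sub_self, if_pos rfl]; ring
    rw [last0, add_zero, show k'+1-1 = k' from by omega]
    unfold S
    apply Finset.sum_congr rfl; intro a ha
    simp only [mem_range] at ha
    apply Finset.sum_congr rfl; intro m _
    rw [if_neg (by omega), show k'+1-a-1 = k'-a from by omega]

lemma RS (l k n : ℕ) :
    S (l+1) k (n+1) = S (l+2) k n + (if k = 0 then 0 else S (l+2) (k-1) n)
      - S (l+1) k n + S l k (n+1) := by
  rw [S_succ (l+1), S_succ l]
  have point : ∀ a m, b 1 a m * b (l+1) (k-a) ((n-m)+1)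
      = b 1 a m * b (l+2) (k-a) (n-m)
        + b 1 a m * (if k-a = 0 then 0 else b (l+2) (k-a-1) (n-m))
        - b 1 a m * b (l+1) (k-a) (n-m) + b 1 a m * b l (k-a) ((n-m)+1) := by
    intro a m
    have h := bR l (k-a) (n-m)
    linear_combination (-(b 1 a m)) * h
  have expand : (∑ a ∈ range (k+1), ∑ m ∈ range (n+1), b 1 a m * b (l+1) (k-a) ((n-m)+1))
      = (∑ a ∈ range (k+1), ∑ m ∈ range (n+1), b 1 a m * b (l+2) (k-a) (n-m))
        + (∑ a ∈ range (k+1), ∑ m ∈ range (n+1),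
            b 1 a m * (if k-a = 0 then 0 else b (l+2) (k-a-1) (n-m)))
        - (∑ a ∈ range (k+1), ∑ m ∈ range (n+1), b 1 a m * b (l+1) (k-a) (n-m))
        + (∑ a ∈ range (k+1), ∑ m ∈ range (n+1), b 1 a m * b l (k-a) ((n-m)+1)) := by
    rw [← Finset.sum_add_distrib, ← Finset.sum_sub_distrib, ← Finset.sum_add_distrib]
    apply Finset.sum_congr rfl; intro a _
    rw [← Finset.sum_add_distrib, ← Finset.sum_sub_distrib, ← Finset.sum_add_distrib]
    apply Finset.sum_congr rfl; intro m _
    exact point a m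
  rw [expand, T2lem]
  unfold S
  ring

theorem key (n l k : ℕ) : S l k n = b (l+1) k n := by
  induction n generalizing l k with
  | zero => rw [S_n0, b_n0]
  | succ n ih =>
    induction l with
    | zero => exact S_l0 k (n+1)
    | succ l ihl =>
      rw [RS l k n]
      simp only [ih]
      rw [ihl]
      have h := bR (l+1) k n
      rcases Nat.eq_zero_or_pos k with rfl|hk
      · simp only [if_pos rfl] at h ⊢
        linarith [h]
      · rw [if_neg (by omega)] at h ⊢
        linarith [h]


noncomputable def mk3 (a c u : ℕ) : Fin 3 →₀ ℕ :=
  Finsupp.single 0 a + Finsupp.single 1 c + Finsupp.single 2 u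

@[simp] lemma mk3_apply0 (a c u : ℕ) : mk3 a c u 0 = a := by
  simp [mk3, Finsupp.single_apply]
@[simp] lemma mk3_apply1 (a c u : ℕ) : mk3 a c u 1 = c := by
  simp [mk3, Finsupp.single_apply]
@[simp] lemma mk3_apply2 (a c u : ℕ) : mk3 a c u 2 = u := by
  simp [mk3, Finsupp.single_apply]

lemma eq_mk3 (f : Fin 3 →₀ ℕ) : f = mk3 (f 0) (f 1) (f 2) := by
  ext x
  fin_cases x <;> simp

lemma coeff_mul_fin3 (φ ψ : MvPowerSeries (Fin 3) ℚ) (e : Fin 3 →₀ ℕ) :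
    MvPowerSeries.coeff e (φ * ψ)
      = ∑ a ∈ range (e 0 + 1), ∑ c ∈ range (e 1 + 1), ∑ u ∈ range (e 2 + 1),
          φ (mk3 a c u) * ψ (mk3 (e 0 - a) (e 1 - c) (e 2 - u)) := by
  rw [MvPowerSeries.coeff_mul]
  have : ∑ a ∈ range (e 0 + 1), ∑ c ∈ range (e 1 + 1), ∑ u ∈ range (e 2 + 1),
          φ (mk3 a c u) * ψ (mk3 (e 0 - a) (e 1 - c) (e 2 - u))
      = ∑ t ∈ (range (e 0 + 1)) ×ˢ ((range (e 1 + 1)) ×ˢ (range (e 2 + 1))),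
          φ (mk3 t.1 t.2.1 t.2.2) * ψ (mk3 (e 0 - t.1) (e 1 - t.2.1) (e 2 - t.2.2)) := by
    rw [Finset.sum_product]
    apply Finset.sum_congr rfl; intro a _
    rw [Finset.sum_product]
  rw [this]
  apply Finset.sum_nbij' (i := fun p => (p.1 0, p.1 1, p.1 2))
    (j := fun t => (mk3 t.1 t.2.1 t.2.2, mk3 (e 0 - t.1) (e 1 - t.2.1) (e 2 - t.2.2)))
  · intro p hp
    rw [Finset.HasAntidiagonal.mem_antidiagonal] at hp
    have h0 : p.1 0 + p.2 0 = e 0 := by rw [← hp]; simp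
    have h1 : p.1 1 + p.2 1 = e 1 := by rw [← hp]; simp
    have h2 : p.1 2 + p.2 2 = e 2 := by rw [← hp]; simp
    simp only [Finset.mem_product, Finset.mem_range]
    omega
  · intro t ht
    simp only [Finset.mem_product, Finset.mem_range] at ht
    rw [Finset.HasAntidiagonal.mem_antidiagonal]
    ext x
    fin_cases x <;> simp <;> omega
  · intro p hp
    rw [Finset.HasAntidiagonal.mem_antidiagonal] at hp
    have h0 : p.1 0 + p.2 0 = e 0 := by rw [← hp]; simp
    have h1 : p.1 1 + p.2 1 = e 1 := by rw [← hp]; simp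
    have h2 : p.1 2 + p.2 2 = e 2 := by rw [← hp]; simp
    have e1 : p.1 = mk3 (p.1 0) (p.1 1) (p.1 2) := eq_mk3 _
    have e2 : p.2 = mk3 (e 0 - p.1 0) (e 1 - p.1 1) (e 2 - p.1 2) := by
      rw [eq_mk3 p.2]
      congr 1 <;> omega
    rw [Prod.ext_iff]
    exact ⟨e1.symm, e2.symm⟩
  · intro t ht
    simp only [Finset.mem_product, Finset.mem_range] at ht
    simp
  · intro p hp
    rw [Finset.HasAntidiagonal.mem_antidiagonal] at hp
    have h0 : p.1 0 + p.2 0 = e 0 := by rw [← hp]; simp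
    have h1 : p.1 1 + p.2 1 = e 1 := by rw [← hp]; simp
    have h2 : p.1 2 + p.2 2 = e 2 := by rw [← hp]; simp
    have e2 : p.2 = mk3 (e 0 - p.1 0) (e 1 - p.1 1) (e 2 - p.1 2) := by
      rw [eq_mk3 p.2]; congr 1 <;> omega
    conv_lhs => rw [eq_mk3 p.1, e2]
    rfl


lemma b_small (l k n : ℕ) (h : n < k) : b l k n = 0 := by
  unfold b; split_ifs <;> first | rfl | omega

lemma b_k0 (l n : ℕ) : b l 0 n = if n = 0 then 1 else 0 := by
  unfold b; rw [if_pos rfl]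

lemma cA_eq (k m : ℕ) : cA k m = b 1 k (k + m) := by
  unfold cA b
  rcases Nat.eq_zero_or_pos k with rfl|hk
  · simp
  · rw [if_neg (by omega), if_neg (by omega), if_neg (by omega),
        show k + m + 1 + k - 1 = 2 * k + m from by omega]
    push_cast
    ring

lemma cGA_eq (k l m : ℕ) : cGA k l m = b (l + 1) k (k + m) := by
  unfold cGA b
  rcases Nat.eq_zero_or_pos k with rfl|hk
  · simp
  · rw [if_neg (by omega), if_neg (by omega), if_neg (by omega),
        show k + m + (l + 1) + k - 1 = l + 2 * k + m from by omega]
    push_cast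
    ring

lemma gA_apply (e : Fin 3 →₀ ℕ) :
    gA e = if e 1 = 0 ∧ e 0 ≤ e 2 then b 1 (e 0) (e 2 - e 0) else 0 := by
  show (if e 1 = 0 ∧ 2 * e 0 ≤ e 2 then cA (e 0) (e 2 - 2 * e 0) else 0) = _
  by_cases h1 : e 1 = 0
  · by_cases h2 : 2 * e 0 ≤ e 2
    · rw [if_pos ⟨h1, h2⟩, if_pos ⟨h1, by omega⟩, cA_eq,
          show e 0 + (e 2 - 2 * e 0) = e 2 - e 0 from by omega]
    · by_cases h3 : e 0 ≤ e 2
      · rw [if_neg (by tauto), if_pos ⟨h1, h3⟩, b_small _ _ _ (by omega)]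
      · rw [if_neg (by tauto), if_neg (by tauto)]
  · rw [if_neg (by tauto), if_neg (by tauto)]

lemma GA_apply (e : Fin 3 →₀ ℕ) :
    GA e = if e 0 + e 1 ≤ e 2 then b (e 1 + 1) (e 0) (e 2 - e 0 - e 1) else 0 := by
  show (if 2 * e 0 + e 1 ≤ e 2 then cGA (e 0) (e 1) (e 2 - 2 * e 0 - e 1) else 0) = _
  by_cases h2 : 2 * e 0 + e 1 ≤ e 2
  · rw [if_pos h2, if_pos (by omega), cGA_eq,
        show e 0 + (e 2 - 2 * e 0 - e 1) = e 2 - e 0 - e 1 from by omega]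
  · by_cases h3 : e 0 + e 1 ≤ e 2
    · rw [if_neg h2, if_pos h3, b_small _ _ _ (by omega)]
    · rw [if_neg h2, if_neg h3]

lemma shift_sum (f : ℕ → ℚ) (a M : ℕ) (ha : a ≤ M) :
    ∑ u ∈ range (M+1), (if a ≤ u then f (u - a) else 0) = ∑ i ∈ range (M-a+1), f i := by
  rw [← Finset.sum_filter]
  have hf : filter (fun u => a ≤ u) (range (M+1)) = Ico a (M+1) := by
    ext u
    simp only [Finset.mem_filter, Finset.mem_range, Finset.mem_Ico]
    omega
  rw [hf, Finset.sum_Ico_eq_sum_range]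
  apply Finset.sum_congr (by congr 1; omega)
  intro i _
  congr 1
  omega

lemma inner_reindex (a c lv M : ℕ) (h : a + c + lv ≤ M) :
    ∑ u ∈ range (M+1), (if a ≤ u then b 1 a (u-a) else 0)
        * (if c + lv ≤ M - u then b (lv+1) c (M - u - c - lv) else 0)
      = ∑ i ∈ range (M-a-c-lv+1), b 1 a i * b (lv+1) c (M-a-c-lv-i) := by
  have e1 : ∀ u ∈ range (M+1),
      (if a ≤ u then b 1 a (u-a) else 0) * (if c + lv ≤ M - u then b (lv+1) c (M - u - c - lv) else 0)
      = if a ≤ u then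
          (b 1 a (u-a) * (if c + lv ≤ M - ((u-a) + a) then b (lv+1) c (M - ((u-a)+a) - c - lv) else 0))
        else 0 := by
    intro u _
    by_cases hau : a ≤ u
    · rw [if_pos hau, if_pos hau, show u - a + a = u from by omega]
    · rw [if_neg hau, if_neg hau, zero_mul]
  rw [Finset.sum_congr rfl e1,
      shift_sum (fun j => b 1 a j * (if c + lv ≤ M - (j + a) then b (lv+1) c (M - (j+a) - c - lv) else 0))
        a M (by omega)]
  have e2 : ∀ j ∈ range (M - a + 1),
      b 1 a j * (if c + lv ≤ M - (j + a) then b (lv+1) c (M - (j+a) - c - lv) else 0)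
      = if j ≤ M - a - c - lv then b 1 a j * b (lv+1) c (M-a-c-lv-j) else 0 := by
    intro j hj
    simp only [mem_range] at hj
    by_cases hjK : j ≤ M - a - c - lv
    · rw [if_pos (by omega), if_pos hjK, show M - (j+a) - c - lv = M-a-c-lv-j from by omega]
    · rw [if_neg (by omega), if_neg hjK, mul_zero]
  rw [Finset.sum_congr rfl e2]
  rw [← Finset.sum_subset (Finset.range_subset_range.2 (by omega : M-a-c-lv+1 ≤ M-a+1))
      (fun j _ hj => by simp only [mem_range] at hj; rw [if_neg (by omega)])]
  apply Finset.sum_congr rfl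
  intro j hj
  simp only [mem_range] at hj
  rw [if_pos (by omega)]

end GAaux

open GAaux Finset in
/-- The functional equation `G_A = g_A + yt·g_A·G_A` holds in `ℚ[[x,y,t]]`,
hence `G_A·(1 - yt·g_A) = g_A`. -/
theorem GA_functional_equation :
    GA = gA + (MvPowerSeries.X 1) * (MvPowerSeries.X 2) * gA * GA ∧
    GA * (1 - (MvPowerSeries.X 1) * (MvPowerSeries.X 2) * gA) = gA := by
  have main : GA = gA + (MvPowerSeries.X 1) * (MvPowerSeries.X 2) * gA * GA := by
    have hprod : (MvPowerSeries.X 1) * (MvPowerSeries.X 2) * gA * GA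
        = (MvPowerSeries.monomial (Finsupp.single 1 1 + Finsupp.single 2 1 : Fin 3 →₀ ℕ) 1) * (gA * GA) := by
      have : (MvPowerSeries.X 1 : MvPowerSeries (Fin 3) ℚ) * (MvPowerSeries.X 2) * gA * GA
          = ((MvPowerSeries.X 1) * (MvPowerSeries.X 2)) * (gA * GA) := by ring
      rw [this, MvPowerSeries.X_def, MvPowerSeries.X_def, MvPowerSeries.monomial_mul_monomial,
          one_mul]
    apply MvPowerSeries.ext
    intro e
    rw [map_add, hprod, MvPowerSeries.coeff_monomial_mul]
    have hcoeffGA : MvPowerSeries.coeff e GA = GA e := rfl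
    have hcoeffgA : MvPowerSeries.coeff e gA = gA e := rfl
    rw [hcoeffGA, hcoeffgA, GA_apply, gA_apply]
    set k := e 0 with hk
    set l := e 1 with hl
    set n := e 2 with hn
    by_cases hle : (Finsupp.single 1 1 + Finsupp.single 2 1 : Fin 3 →₀ ℕ) ≤ e
    case neg =>
      -- no product contribution
      rw [if_neg hle]
      have : l = 0 ∨ n = 0 := by
        by_contra hc
        push_neg at hc
        apply hle
        rw [Finsupp.le_def]
        intro i
        fin_cases i <;> simp [Finsupp.single_apply] <;> omega
      by_cases h0 : l = 0
      · rw [h0]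
        simp only [Nat.add_zero, Nat.sub_zero, Nat.zero_add]
        by_cases h3 : k ≤ n
        · rw [if_pos h3, if_pos (by simp [h3])]
          ring
        · rw [if_neg h3, if_neg (by simp [h3])]
          ring
      · have hn0 : n = 0 := by tauto
        rw [hn0, if_neg (by omega), if_neg (by tauto)]
        ring
    case pos =>
      rw [if_pos hle]
      -- l ≥ 1 and n ≥ 1
      have hl1 : 1 ≤ l := by
        have := Finsupp.le_def.1 hle 1
        simpa [Finsupp.single_apply] using this
      have hn1 : 1 ≤ n := by
        have := Finsupp.le_def.1 hle 2
        simpa [Finsupp.single_apply] using this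
      rw [coeff_mul_fin3]
      have hed0 : (e - (Finsupp.single 1 1 + Finsupp.single 2 1 : Fin 3 →₀ ℕ)) 0 = k := by
        simp [Finsupp.tsub_apply, Finsupp.single_apply]
        rfl
      have hed1 : (e - (Finsupp.single 1 1 + Finsupp.single 2 1 : Fin 3 →₀ ℕ)) 1 = l - 1 := by
        simp [Finsupp.tsub_apply, Finsupp.single_apply]
        rfl
      have hed2 : (e - (Finsupp.single 1 1 + Finsupp.single 2 1 : Fin 3 →₀ ℕ)) 2 = n - 1 := by
        simp [Finsupp.tsub_apply, Finsupp.single_apply]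
        rfl
      rw [hed0, hed1, hed2]
      rw [show (if l = 0 ∧ k ≤ n then b 1 k (n - k) else 0) = 0 from if_neg (by omega),
          zero_add, one_mul]
      have hcollapse : ∀ a ∈ range (k+1),
          (∑ c ∈ range (l-1+1), ∑ u ∈ range (n-1+1), gA (mk3 a c u) * GA (mk3 (k-a) (l-1-c) (n-1-u)))
          = ∑ u ∈ range (n-1+1),
              (if a ≤ u then b 1 a (u-a) else 0)
              * (if (k-a) + (l-1) ≤ (n-1) - u then
                  b ((l-1)+1) (k-a) ((n-1) - u - (k-a) - (l-1)) else 0) := by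
        intro a _
        rw [Finset.sum_eq_single_of_mem 0 (mem_range.2 (by omega))]
        · apply Finset.sum_congr rfl
          intro u _
          congr 1
          · rw [gA_apply]
            simp only [mk3_apply0, mk3_apply1, mk3_apply2, Nat.sub_zero]
            by_cases hau : a ≤ u
            · rw [if_pos (by simp [hau]), if_pos hau]
            · rw [if_neg (by simp [hau]), if_neg hau]
          · rw [GA_apply]
            simp only [mk3_apply0, mk3_apply1, mk3_apply2, Nat.sub_zero]
        · intro c _ hc
          apply Finset.sum_eq_zero
          intro u _
          rw [gA_apply]
          simp only [mk3_apply0, mk3_apply1, mk3_apply2]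
          rw [if_neg (by tauto), zero_mul]
      rw [Finset.sum_congr rfl hcollapse]
      by_cases hkln : k + l ≤ n
      · rw [if_pos hkln]
        have hre : ∀ a ∈ range (k+1),
            (∑ u ∈ range ((n-1)+1), (if a ≤ u then b 1 a (u-a) else 0)
              * (if (k-a) + (l-1) ≤ (n-1) - u then
                  b ((l-1)+1) (k-a) ((n-1) - u - (k-a) - (l-1)) else 0))
            = ∑ i ∈ range ((n-k-l)+1), b 1 a i * b ((l-1)+1) (k-a) ((n-k-l)-i) := by
          intro a ha
          simp only [mem_range] at ha
          rw [inner_reindex a (k-a) (l-1) (n-1) (by omega),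
              show n-1-a-(k-a)-(l-1) = n-k-l from by omega]
        rw [Finset.sum_congr rfl hre, show l - 1 + 1 = l from by omega]
        exact (key (n-k-l) l k).symm
      · rw [if_neg hkln]
        symm
        apply Finset.sum_eq_zero
        intro a ha
        apply Finset.sum_eq_zero
        intro u hu
        simp only [mem_range] at ha hu
        by_cases h1 : a ≤ u
        · by_cases h2 : (k-a) + (l-1) ≤ (n-1) - u
          · rw [if_pos h1, if_pos h2]
            by_cases hu2 : u < 2*a
            · rw [b_small 1 a (u-a) (by omega), zero_mul]
            · by_cases hka : k - a = 0
              · rw [hka, b_k0, if_neg (by omega), mul_zero]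
              · rw [b_small ((l-1)+1) (k-a) _ (by omega), mul_zero]
          · rw [if_neg h2, mul_zero]
        · rw [if_neg h1, zero_mul]
  refine ⟨main, ?_⟩
  linear_combination main
end

section
/- Carlitz-type convolution identity (second B case): for all k,m,ℓ ≥ 0, Σ_{k₁+k₂=k, m₁+m₂=m} C(2k₁+m₁,k₁)·C(k₁+m₁-1,k₁-1)·[(ℓ+1)/(ℓ+k₂+m₂+1)]·C(ℓ+2k₂+m₂,k₂)·C(k₂+m₂-1,k₂-1) = C(2k+m+ℓ+1,k)·C(k+m-1,m), equivalently the power series identity G_B = g_B + yt·g_B·G_A holds in ℚ[[x,y,t]]. -/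
open Finset

/-- Coefficient of `x^k t^{2k+m}` in `g_B` (constant term `1` by convention). -/
noncomputable def cB (k m : ℕ) : ℚ :=
  if k = 0 then (if m = 0 then 1 else 0)
  else ((Nat.choose (2 * k + m) k) : ℚ) * (Nat.choose (k + m - 1) (k - 1))

def DD (k m : ℕ) : ℚ := (Nat.choose (k + m - 1) m : ℚ)

def phi (L k m : ℕ) : ℚ := (Nat.choose (2 * k + m + L) k : ℚ) * DD k m

lemma cB_eq_phi (k m : ℕ) : cB k m = phi 0 k m := by
  rcases k with _ | K
  · rcases m with _ | M <;> simp [cB, phi, DD, Nat.choose_eq_zero_of_lt]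
  · simp only [cB, phi, DD, if_neg (Nat.succ_ne_zero K)]
    have h1 : K + 1 + m - 1 = K + m := by omega
    have h2 : K + 1 - 1 = K := by omega
    have h3 : 2 * (K + 1) + m + 0 = 2 * (K + 1) + m := by omega
    rw [h1, h2, h3]
    congr 1
    have := Nat.choose_symm (n := K + m) (k := m) (by omega)
    rw [show K + m - m = K by omega] at this
    exact_mod_cast congrArg (Nat.cast (R := ℚ)) this

lemma Rphi (L k m : ℕ) : phi (L + 1) k m =
    phi L k m + (if m = 0 then 0 else phi (L + 2) k (m - 1) - phi (L + 1) k (m - 1))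
      + (if k = 0 then 0 else phi (L + 2) (k - 1) m) := by
  rcases k with _ | K
  · rcases m with _ | M <;> simp [phi, DD]
  · rcases m with _ | M
    · simp only [if_pos rfl, if_neg (Nat.succ_ne_zero K), Nat.add_sub_cancel, add_zero]
      show phi (L + 1) (K + 1) 0 = phi L (K + 1) 0 + 0 + phi (L + 2) K 0
      simp only [phi, DD]
      rw [show 2 * (K + 1) + 0 + (L + 1) = (2 * K + L + 2) + 1 by ring,
        show 2 * (K + 1) + 0 + L = 2 * K + L + 2 by ring,
        show 2 * K + 0 + (L + 2) = 2 * K + L + 2 by ring,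
        show K + 1 + 0 - 1 = K by omega, show K + 0 - 1 = K - 1 by omega]
      have hp : ((2 * K + L + 2) + 1).choose (K + 1) =
          (2 * K + L + 2).choose K + (2 * K + L + 2).choose (K + 1) :=
        Nat.choose_succ_succ _ _
      rw [hp]
      push_cast [Nat.choose_zero_right]
      ring
  -- main case k = K+1, m = M+1
    · simp only [if_neg (Nat.succ_ne_zero M), if_neg (Nat.succ_ne_zero K), Nat.add_sub_cancel]
      simp only [phi, DD]
      rw [show 2 * (K + 1) + (M + 1) + (L + 1) = (2 * K + M + L + 3) + 1 by ring,
        show 2 * (K + 1) + (M + 1) + L = 2 * K + M + L + 3 by ring,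
        show 2 * (K + 1) + M + (L + 2) = (2 * K + M + L + 3) + 1 by ring,
        show 2 * (K + 1) + M + (L + 1) = 2 * K + M + L + 3 by ring,
        show 2 * K + (M + 1) + (L + 2) = 2 * K + M + L + 3 by ring,
        show K + 1 + (M + 1) - 1 = (K + M) + 1 by omega,
        show K + 1 + M - 1 = K + M by omega,
        show K + (M + 1) - 1 = K + M by omega]
      have hp1 : ((2 * K + M + L + 3) + 1).choose (K + 1) =
          (2 * K + M + L + 3).choose K + (2 * K + M + L + 3).choose (K + 1) :=
        Nat.choose_succ_succ _ _
      have hp2 : ((K + M) + 1).choose (M + 1) = (K + M).choose M + (K + M).choose (M + 1) :=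
        Nat.choose_succ_succ _ _
      rw [hp1, hp2]
      push_cast
      ring


set_option maxHeartbeats 2000000 in
lemma keyAll (l k m : ℕ) : cGA k l m =
    (if l = 0 then (if k = 0 ∧ m = 0 then (1 : ℚ) else 0) else cGA k (l - 1) m)
    + (if m = 0 then 0 else cGA k (l + 1) (m - 1) - cGA k l (m - 1))
    + (if k = 0 then 0 else cGA (k - 1) (l + 1) m) := by
  rcases k with _ | K
  · rcases m with _ | M
    · rcases l with _ | l' <;> simp [cGA]
    · rcases l with _ | l' <;> simp [cGA]
  · have hprev : (if l = 0 then (if K + 1 = 0 ∧ m = 0 then (1 : ℚ) else 0)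
        else cGA (K + 1) (l - 1) m)
        = (l : ℚ) / ((l : ℚ) + K + m + 1)
          * (Nat.choose (l + 2 * K + m + 1) (K + 1) : ℚ) * (Nat.choose (K + m) K : ℚ) := by
      rcases l with _ | l'
      · simp
      · simp only [if_neg (Nat.succ_ne_zero l'), Nat.add_sub_cancel, cGA,
          if_neg (Nat.succ_ne_zero K)]
        rw [show l' + 2 * (K + 1) + m = l' + 1 + 2 * K + m + 1 by ring,
          show K + 1 + m - 1 = K + m by omega]
        push_cast
        ring
    rw [hprev, if_neg (Nat.succ_ne_zero K), Nat.add_sub_cancel]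
    rcases m with _ | M
    · -- m = 0
      rw [if_pos rfl]
      rcases K with _ | S
      · -- k = 1, m = 0
        simp only [cGA, if_neg (Nat.succ_ne_zero 0), if_pos rfl, if_true]
        simp only [show l + 2 * (0 + 1) + 0 = l + 2 by ring, show l + 2 * 0 + 0 + 1 = l + 1 by ring,
          show (0:ℕ) + 1 = 1 by omega, show (0:ℕ) + 0 = 0 by omega]
        push_cast [Nat.choose_one_right, Nat.choose_zero_right, Nat.choose_self]
        have d1 : ((l : ℚ) + 1) ≠ 0 := by positivity
        have d2 : ((l : ℚ) + 2) ≠ 0 := by positivity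
        field_simp
        ring
      · -- k = S + 2, m = 0
        simp only [cGA, if_neg (Nat.succ_ne_zero S), if_neg (Nat.succ_ne_zero (S + 1))]
        simp only [show S + 1 + 1 = S + 2 by omega,
          show l + 2 * (S + 2) + 0 = l + 2 * S + 4 by ring,
          show S + 2 + 0 - 1 = S + 1 by omega, show S + 2 - 1 = S + 1 by omega,
          show l + 2 * (S + 1) + 0 + 1 = l + 2 * S + 3 by ring,
          show S + 1 + 0 = S + 1 by omega, show S + 1 + 0 - 1 = S by omega,
          show S + 1 - 1 = S by omega,
          show l + 1 + 2 * (S + 1) + 0 = l + 2 * S + 3 by ring]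
        -- atoms: X := choose (l+2S+3) (S+2)
        have hA : ((l + 2 * S + 4).choose (S + 2) : ℚ) * ((l : ℚ) + S + 2)
            = ((l + 2 * S + 3).choose (S + 2) : ℚ) * ((l : ℚ) + 2 * S + 4) := by
          have h := Nat.choose_mul_succ_eq (l + 2 * S + 3) (S + 2)
          rw [show l + 2 * S + 3 + 1 = l + 2 * S + 4 by ring,
            show l + 2 * S + 3 + 1 - (S + 2) = l + S + 2 by omega] at h
          exact_mod_cast congrArg (Nat.cast (R := ℚ)) h.symm
        have hB : ((l + 2 * S + 3).choose (S + 1) : ℚ) * ((l : ℚ) + S + 2)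
            = ((l + 2 * S + 3).choose (S + 2) : ℚ) * ((S : ℚ) + 2) := by
          have h := Nat.choose_succ_right_eq (l + 2 * S + 3) (S + 1)
          rw [show S + 1 + 1 = S + 2 by omega,
            show l + 2 * S + 3 - (S + 1) = l + S + 2 by omega] at h
          exact_mod_cast congrArg (Nat.cast (R := ℚ)) h.symm
        have d1 : ((l : ℚ) + S + 2) ≠ 0 := by positivity
        have hA' : ((l + 2 * S + 4).choose (S + 2) : ℚ)
            = ((l + 2 * S + 3).choose (S + 2) : ℚ) * ((l : ℚ) + 2 * S + 4) / ((l : ℚ) + S + 2) := by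
          rw [eq_div_iff d1]; exact hA
        have hB' : ((l + 2 * S + 3).choose (S + 1) : ℚ)
            = ((l + 2 * S + 3).choose (S + 2) : ℚ) * ((S : ℚ) + 2) / ((l : ℚ) + S + 2) := by
          rw [eq_div_iff d1]; exact hB
        rw [hA', hB']
        push_cast [Nat.choose_self]
        have d3 : ((l : ℚ) + (S + 1) + 0 + 1) ≠ 0 := by positivity
        have d4 : ((l : ℚ) + 1 + (S + 1) + 0 + 1) ≠ 0 := by positivity
        have d5 : ((l : ℚ) + (S + 1 + 1) + 0 + 1) ≠ 0 := by positivity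
        field_simp
        ring
    · -- m = M + 1
      rw [if_neg (Nat.succ_ne_zero M), Nat.add_sub_cancel]
      rcases K with _ | S
      · -- k = 1, m = M + 1
        simp only [cGA, if_neg (Nat.succ_ne_zero 0)]
        simp only [show l + 2 * (0 + 1) + (M + 1) = l + M + 3 by ring,
          show (0:ℕ) + 1 + (M + 1) - 1 = M + 1 by omega, show (0:ℕ) + 1 - 1 = 0 by omega,
          show l + 2 * 0 + (M + 1) + 1 = l + M + 2 by ring,
          show (0:ℕ) + (M + 1) = M + 1 by omega,
          show l + 1 + 2 * (0 + 1) + M = l + M + 3 by ring,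
          show (0:ℕ) + 1 + M - 1 = M by omega, show (0:ℕ) + 1 = 1 by omega,
          show l + 2 * (0 + 1) + M = l + M + 2 by ring]
        push_cast [Nat.choose_one_right, Nat.choose_zero_right]
        have d1 : ((l : ℚ) + 1 + M + 1 + 1 + 1) ≠ 0 := by positivity
        have d2 : ((l : ℚ) + 1 + (M + 1) + 1) ≠ 0 := by positivity
        have d3 : ((l : ℚ) + M + 2) ≠ 0 := by positivity
        field_simp
        ring
      · -- k = S + 2, m = M + 1 : the main case
        simp only [cGA, if_neg (Nat.succ_ne_zero S), if_neg (Nat.succ_ne_zero (S + 1))]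
        simp only [show S + 1 + 1 = S + 2 by omega,
          show l + 2 * (S + 2) + (M + 1) = l + 2 * S + M + 5 by ring,
          show S + 2 + (M + 1) - 1 = S + M + 2 by omega,
          show S + 2 - 1 = S + 1 by omega,
          show l + 2 * (S + 1) + (M + 1) + 1 = l + 2 * S + M + 4 by ring,
          show S + 1 + (M + 1) = S + M + 2 by ring,
          show l + 1 + 2 * (S + 2) + M = l + 2 * S + M + 5 by ring,
          show S + 2 + M - 1 = S + M + 1 by omega,
          show l + 2 * (S + 2) + M = l + 2 * S + M + 4 by ring,
          show l + 1 + 2 * (S + 1) + (M + 1) = l + 2 * S + M + 4 by ring,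
          show S + M + 2 - 1 = S + M + 1 by omega,
          show S + 1 - 1 = S by omega]
        -- atoms: X := choose (l+2S+M+4) (S+2), Y := choose (S+M+2) (S+1)
        have d1 : ((l : ℚ) + S + M + 3) ≠ 0 := by positivity
        have d2 : ((S : ℚ) + M + 2) ≠ 0 := by positivity
        have hA' : ((l + 2 * S + M + 5).choose (S + 2) : ℚ)
            = ((l + 2 * S + M + 4).choose (S + 2) : ℚ) * ((l : ℚ) + 2 * S + M + 5)
              / ((l : ℚ) + S + M + 3) := by
          rw [eq_div_iff d1]
          have h := Nat.choose_mul_succ_eq (l + 2 * S + M + 4) (S + 2)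
          rw [show l + 2 * S + M + 4 + 1 = l + 2 * S + M + 5 by ring,
            show l + 2 * S + M + 4 + 1 - (S + 2) = l + S + M + 3 by omega] at h
          exact_mod_cast congrArg (Nat.cast (R := ℚ)) h.symm
        have hB' : ((l + 2 * S + M + 4).choose (S + 1) : ℚ)
            = ((l + 2 * S + M + 4).choose (S + 2) : ℚ) * ((S : ℚ) + 2)
              / ((l : ℚ) + S + M + 3) := by
          rw [eq_div_iff d1]
          have h := Nat.choose_succ_right_eq (l + 2 * S + M + 4) (S + 1)
          rw [show S + 1 + 1 = S + 2 by omega,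
            show l + 2 * S + M + 4 - (S + 1) = l + S + M + 3 by omega] at h
          exact_mod_cast congrArg (Nat.cast (R := ℚ)) h.symm
        have hC' : ((S + M + 1).choose (S + 1) : ℚ)
            = ((S + M + 2).choose (S + 1) : ℚ) * ((M : ℚ) + 1) / ((S : ℚ) + M + 2) := by
          rw [eq_div_iff d2]
          have h := Nat.choose_mul_succ_eq (S + M + 1) (S + 1)
          rw [show S + M + 1 + 1 = S + M + 2 by ring,
            show S + M + 1 + 1 - (S + 1) = M + 1 by omega] at h
          exact_mod_cast congrArg (Nat.cast (R := ℚ)) h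
        have hD' : ((S + M + 1).choose S : ℚ)
            = ((S + M + 2).choose (S + 1) : ℚ) * ((S : ℚ) + 1) / ((S : ℚ) + M + 2) := by
          have h1 := Nat.choose_succ_right_eq (S + M + 2) S
          rw [show S + M + 2 - S = M + 2 by omega] at h1
          have h2 := Nat.choose_mul_succ_eq (S + M + 1) S
          rw [show S + M + 1 + 1 = S + M + 2 by ring,
            show S + M + 1 + 1 - S = M + 2 by omega] at h2
          have h1q : ((S + M + 2).choose (S + 1) : ℚ) * ((S : ℚ) + 1)
              = ((S + M + 2).choose S : ℚ) * ((M : ℚ) + 2) := by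
            exact_mod_cast congrArg (Nat.cast (R := ℚ)) h1
          have h2q : ((S + M + 1).choose S : ℚ) * ((S : ℚ) + M + 2)
              = ((S + M + 2).choose S : ℚ) * ((M : ℚ) + 2) := by
            exact_mod_cast congrArg (Nat.cast (R := ℚ)) h2
          rw [eq_div_iff d2, h1q, ← h2q]
        rw [hA', hB', hC', hD']
        push_cast
        have d3 : ((l : ℚ) + (S + 1 + 1) + (M + 1) + 1) ≠ 0 := by positivity
        have d4 : ((l : ℚ) + 1 + (S + 1 + 1) + M + 1) ≠ 0 := by positivity
        have d5 : ((l : ℚ) + 1 + (S + 1) + (M + 1) + 1) ≠ 0 := by positivity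
        field_simp
        ring

noncomputable def conv_s11 (L l k m : ℕ) : ℚ :=
  ∑ k₁ ∈ range (k + 1), ∑ m₁ ∈ range (m + 1), phi L k₁ m₁ * cGA (k - k₁) l (m - m₁)

lemma conv_rec (L l k m : ℕ) : conv_s11 L l k m =
    (if l = 0 then phi L k m else conv_s11 L (l - 1) k m)
    + (if m = 0 then 0 else conv_s11 L (l + 1) k (m - 1) - conv_s11 L l k (m - 1))
    + (if k = 0 then 0 else conv_s11 L (l + 1) (k - 1) m) := by
  have h1 : conv_s11 L l k m = ∑ k₁ ∈ range (k + 1), ∑ m₁ ∈ range (m + 1),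
      (phi L k₁ m₁ * (if l = 0 then (if k - k₁ = 0 ∧ m - m₁ = 0 then (1 : ℚ) else 0)
          else cGA (k - k₁) (l - 1) (m - m₁))
        + phi L k₁ m₁ * (if m - m₁ = 0 then 0
          else cGA (k - k₁) (l + 1) (m - m₁ - 1) - cGA (k - k₁) l (m - m₁ - 1))
        + phi L k₁ m₁ * (if k - k₁ = 0 then 0 else cGA (k - k₁ - 1) (l + 1) (m - m₁))) := by
    unfold conv_s11
    refine Finset.sum_congr rfl fun k₁ _ => Finset.sum_congr rfl fun m₁ _ => ?_
    rw [keyAll l (k - k₁) (m - m₁), mul_add, mul_add]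
  rw [h1]
  simp only [Finset.sum_add_distrib]
  congr 1
  · congr 1
    · -- SA
      rcases l with _ | l'
      · simp only [reduceIte]
        have hinner : ∀ k₁ ∈ range (k + 1),
            (∑ m₁ ∈ range (m + 1), phi L k₁ m₁ *
              (if k - k₁ = 0 ∧ m - m₁ = 0 then (1 : ℚ) else 0))
            = if k₁ = k then phi L k m else 0 := by
          intro k₁ hk₁
          simp only [Finset.mem_range] at hk₁
          by_cases hc : k₁ = k
          · subst hc
            rw [if_pos rfl]
            have hin2 : ∀ m₁ ∈ range (m + 1), phi L k₁ m₁ *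
                (if k₁ - k₁ = 0 ∧ m - m₁ = 0 then (1 : ℚ) else 0)
                = if m₁ = m then phi L k₁ m else 0 := by
              intro m₁ hm₁
              simp only [Finset.mem_range] at hm₁
              by_cases hm : m₁ = m
              · subst hm; rw [if_pos ⟨by omega, by omega⟩, if_pos rfl, mul_one]
              · rw [if_neg (by omega), if_neg hm, mul_zero]
            rw [Finset.sum_congr rfl hin2, Finset.sum_ite_eq' (range (m + 1)) m,
              if_pos (Finset.mem_range.mpr (Nat.lt_succ_self m))]
          · rw [if_neg hc]
            refine Finset.sum_eq_zero fun m₁ _ => ?_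
            rw [if_neg (by omega), mul_zero]
        rw [Finset.sum_congr rfl hinner, Finset.sum_ite_eq' (range (k + 1)) k,
          if_pos (Finset.mem_range.mpr (Nat.lt_succ_self k))]
      · simp only [if_neg (Nat.succ_ne_zero l'), Nat.add_sub_cancel, conv_s11]
    · -- SB
      rcases m with _ | M
      · simp
      · simp only [if_neg (Nat.succ_ne_zero M), Nat.add_sub_cancel]
        have hinner : ∀ k₁ ∈ range (k + 1),
            (∑ m₁ ∈ range (M + 1 + 1), phi L k₁ m₁ * (if M + 1 - m₁ = 0 then 0
              else cGA (k - k₁) (l + 1) (M + 1 - m₁ - 1) - cGA (k - k₁) l (M + 1 - m₁ - 1)))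
            = ∑ m₁ ∈ range (M + 1), phi L k₁ m₁ *
                (cGA (k - k₁) (l + 1) (M - m₁) - cGA (k - k₁) l (M - m₁)) := by
          intro k₁ _
          rw [Finset.sum_range_succ, if_pos (by omega), mul_zero, add_zero]
          refine Finset.sum_congr rfl fun m₁ hm₁ => ?_
          simp only [Finset.mem_range] at hm₁
          rw [if_neg (by omega), show M + 1 - m₁ - 1 = M - m₁ by omega]
        rw [Finset.sum_congr rfl hinner]
        unfold conv_s11
        rw [← Finset.sum_sub_distrib]
        refine Finset.sum_congr rfl fun k₁ _ => ?_
        rw [← Finset.sum_sub_distrib]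
        exact Finset.sum_congr rfl fun m₁ _ => mul_sub _ _ _
  · -- SC
    rcases k with _ | K
    · simp
    · simp only [if_neg (Nat.succ_ne_zero K), Nat.add_sub_cancel]
      rw [Finset.sum_range_succ]
      have hlast : (∑ m₁ ∈ range (m + 1), phi L (K + 1) m₁ *
          (if K + 1 - (K + 1) = 0 then (0:ℚ)
            else cGA (K + 1 - (K + 1) - 1) (l + 1) (m - m₁))) = 0 := by
        refine Finset.sum_eq_zero fun m₁ _ => ?_
        rw [if_pos (by omega), mul_zero]
      rw [hlast, add_zero]
      unfold conv_s11
      refine Finset.sum_congr rfl fun k₁ hk₁ => ?_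
      simp only [Finset.mem_range] at hk₁
      refine Finset.sum_congr rfl fun m₁ _ => ?_
      rw [if_neg (by omega), show K + 1 - k₁ - 1 = K - k₁ by omega]

lemma conv_eq (n : ℕ) : ∀ k m, 2 * k + m = n → ∀ l L, conv_s11 L l k m = phi (L + l + 1) k m := by
  induction n using Nat.strong_induction_on with
  | _ n ih =>
    intro k m hn l
    induction l with
    | zero =>
      intro L
      rw [conv_rec]
      simp only [reduceIte]
      have hB : (if m = 0 then (0:ℚ) else conv_s11 L (0 + 1) k (m - 1) - conv_s11 L 0 k (m - 1))
          = (if m = 0 then 0 else phi (L + 2) k (m - 1) - phi (L + 1) k (m - 1)) := by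
        rcases m with _ | M
        · rfl
        · simp only [if_neg (Nat.succ_ne_zero M), Nat.add_sub_cancel]
          rw [ih (2 * k + M) (by omega) k M rfl 1 L, ih (2 * k + M) (by omega) k M rfl 0 L]
      have hC : (if k = 0 then (0:ℚ) else conv_s11 L (0 + 1) (k - 1) m)
          = (if k = 0 then 0 else phi (L + 2) (k - 1) m) := by
        rcases k with _ | K
        · rfl
        · simp only [if_neg (Nat.succ_ne_zero K), Nat.add_sub_cancel]
          rw [ih (2 * K + m) (by omega) K m rfl 1 L]
      rw [hB, hC, show L + 0 + 1 = L + 1 by ring]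
      exact (Rphi L k m).symm
    | succ l ihl =>
      intro L
      rw [conv_rec]
      simp only [if_neg (Nat.succ_ne_zero l), Nat.add_sub_cancel]
      rw [ihl L]
      have hB : (if m = 0 then (0:ℚ) else conv_s11 L (l + 1 + 1) k (m - 1) - conv_s11 L (l + 1) k (m - 1))
          = (if m = 0 then 0
              else phi (L + l + 1 + 2) k (m - 1) - phi (L + l + 1 + 1) k (m - 1)) := by
        rcases m with _ | M
        · rfl
        · simp only [if_neg (Nat.succ_ne_zero M), Nat.add_sub_cancel]
          rw [ih (2 * k + M) (by omega) k M rfl (l + 1 + 1) L,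
            ih (2 * k + M) (by omega) k M rfl (l + 1) L]
          rw [show L + (l + 1 + 1) + 1 = L + l + 1 + 2 by ring,
            show L + (l + 1) + 1 = L + l + 1 + 1 by ring]
      have hC : (if k = 0 then (0:ℚ) else conv_s11 L (l + 1 + 1) (k - 1) m)
          = (if k = 0 then 0 else phi (L + l + 1 + 2) (k - 1) m) := by
        rcases k with _ | K
        · rfl
        · simp only [if_neg (Nat.succ_ne_zero K), Nat.add_sub_cancel]
          rw [ih (2 * K + m) (by omega) K m rfl (l + 1 + 1) L]
          rw [show L + (l + 1 + 1) + 1 = L + l + 1 + 2 by ring]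
      rw [hB, hC, show L + (l + 1) + 1 = L + l + 1 + 1 by ring]
      exact (Rphi (L + l + 1) k m).symm

/-- Carlitz-type convolution identity (second B case): for all `k, m, ℓ ≥ 0`,
`Σ_{k₁+k₂=k, m₁+m₂=m} C(2k₁+m₁,k₁)·C(k₁+m₁-1,k₁-1)·
  [(ℓ+1)/(ℓ+k₂+m₂+1)]·C(ℓ+2k₂+m₂,k₂)·C(k₂+m₂-1,k₂-1) = C(2k+m+ℓ+1,k)·C(k+m-1,m)`,
equivalently `G_B = g_B + yt·g_B·G_A` in `ℚ[[x,y,t]]`. -/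
theorem carlitz_convolution_B (k m l : ℕ) :
    ∑ k₁ ∈ range (k + 1), ∑ m₁ ∈ range (m + 1),
        cB k₁ m₁ * cGA (k - k₁) l (m - m₁) =
      ((Nat.choose (2 * k + m + l + 1) k) : ℚ) * (Nat.choose (k + m - 1) m) := by
  have h1 : (∑ k₁ ∈ range (k + 1), ∑ m₁ ∈ range (m + 1),
      cB k₁ m₁ * cGA (k - k₁) l (m - m₁)) = conv_s11 0 l k m := by
    unfold conv_s11
    refine Finset.sum_congr rfl fun k₁ _ => Finset.sum_congr rfl fun m₁ _ => ?_
    rw [cB_eq_phi]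
  rw [h1, conv_eq (2 * k + m) k m rfl l 0]
  simp only [phi, DD]
  rw [show 2 * k + m + (0 + l + 1) = 2 * k + m + l + 1 by ring]
end

section
/- Let g ∈ ℚ[[x,t]] satisfy g² = (1-t)² - 4xt² with constant term 1, and set g_D = (g-1)(g-1+t)/(2g). Then g_D = (2 - θ_t)((g-1+t)/2) where θ_t = t·∂/∂t is the Euler derivation in t. Equivalently, t·g·(∂g/∂t) = g² + t - 1, and applying (2-θ_t) to (g-1+t)/2 yields (g-1)(g-1+t)/(2g). -/
open PowerSeries

/-- Let `g ∈ ℚ[[x]][[t]]` satisfy `g² = (1-t)² - 4xt²` with constant term `1`, and let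
`g_D` be the power series with `2g·g_D = (g-1)(g-1+t)`. Then:
(1) `t·g·(∂g/∂t) = g² + t - 1`, and
(2) `g_D = (2 - θ_t)((g-1+t)/2)` where `θ_t = t·∂/∂t` is the Euler derivation,
equivalently `2·g_D = 2·(g-1+t) - t·∂(g-1+t)/∂t`. -/
theorem gD_euler_derivation (g gD : PowerSeries (PowerSeries ℚ))
    (x t : PowerSeries (PowerSeries ℚ))
    (hx : x = (PowerSeries.C (PowerSeries.X : PowerSeries ℚ) : PowerSeries (PowerSeries ℚ)))
    (ht : t = PowerSeries.X)
    (hg : g ^ 2 = (1 - t) ^ 2 - 4 * x * t ^ 2)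
    (hg0 : PowerSeries.constantCoeff g = 1)
    (hD : 2 * g * gD = (g - 1) * (g - 1 + t)) :
    t * g * g.derivativeFun = g ^ 2 + t - 1 ∧
    2 * gD = 2 * (g - 1 + t) - t * (g - 1 + t).derivativeFun := by
  have key : ∀ f : PowerSeries (PowerSeries ℚ), f.derivativeFun = d⁄dX (PowerSeries ℚ) f :=
    fun _ => rfl
  have hdg : d⁄dX (PowerSeries ℚ) (g ^ 2) = d⁄dX (PowerSeries ℚ) ((1 - t) ^ 2 - 4 * x * t ^ 2) := by
    rw [hg]
  have hxd : d⁄dX (PowerSeries ℚ) x = 0 := by rw [hx]; simp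
  have htd : d⁄dX (PowerSeries ℚ) t = 1 := by rw [ht]; simp
  have h4 : (d⁄dX (PowerSeries ℚ)) (4 : PowerSeries (PowerSeries ℚ)) = 0 := by
    have : (4 : PowerSeries (PowerSeries ℚ)) = C (4 : PowerSeries ℚ) := by simp [map_ofNat]
    rw [this, derivative_C]
  have h2 : (2 : PowerSeries (PowerSeries ℚ)) ≠ 0 := by
    intro h
    have := congrArg (PowerSeries.constantCoeff (R := ℚ) ∘ PowerSeries.constantCoeff (R := PowerSeries ℚ)) h
    simp [map_ofNat] at this
  simp only [pow_two, Derivation.leibniz, map_sub, map_one, hxd, htd, h4, smul_eq_mul,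
    Derivation.map_one_eq_zero] at hdg
  have h1 : t * g * g.derivativeFun = g ^ 2 + t - 1 := by
    rw [key]
    apply mul_left_cancel₀ h2
    linear_combination t * hdg - 2 * hg
  refine ⟨h1, ?_⟩
  have hgne : g ≠ 0 := by
    intro h
    rw [h] at hg0; rw [map_zero] at hg0; exact one_ne_zero hg0.symm
  have htd' : t.derivativeFun = 1 := by rw [key]; exact htd
  have e1 : (t - 1).derivativeFun = 1 := by
    have := derivativeFun_add (t - 1) 1
    rw [derivativeFun_one, add_zero, sub_add_cancel, htd'] at this
    exact this.symm
  have hder : (g - 1 + t).derivativeFun = g.derivativeFun + 1 := by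
    have : g - 1 + t = g + (t - 1) := by ring
    rw [this, derivativeFun_add, e1]
  rw [hder]
  apply mul_left_cancel₀ hgne
  linear_combination hD + h1
end
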